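/- The induction step for parallel filtering: if a_{k-l+1} ⊗ ⋯ ⊗ a_k = (p(x_k | y_{k-l+1:k}, x_{k-l}), p(y_{k-l+1:k} | x_{k-l})), then a_{k-l} ⊗ (a_{k-l+1} ⊗ ⋯ ⊗ a_k) = (p(x_k | y_{k-l:k}, x_{k-l-1}), p(y_{k-l:k} | x_{k-l-1})). -/

import Mathlib

open Finset

/-- Forward propagation from a conditioning state in a discrete hidden Markov
model with fixed observations:
`hmmDelta trans like j l z x = p(x_{j+l} = x, y_{j:j+l} ∣ x_{j-1} = z)`, where
`trans k z x = p(x_k = x ∣ x_{k-1} = z)` and `like k x = p(y_k ∣ x_k = x)`. -/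
def hmmDelta {S : Type*} [Fintype S]
    (trans : ℕ → S → S → ℝ) (like : ℕ → S → ℝ) : ℕ → ℕ → S → S → ℝ
  | j, 0, z, x => trans j z x * like j x
  | j, l + 1, z, x =>
      (∑ w, hmmDelta trans like j l z w * trans (j + l + 1) w x) * like (j + l + 1) x

/-- The Bayesian filtering operator `⊗` on pairs `(f, g)`. -/
noncomputable def filtOp {S : Type*} [Fintype S]
    (a b : (S → S → ℝ) × (S → ℝ)) : (S → S → ℝ) × (S → ℝ) :=
  (fun x z => (∑ y, b.2 y * b.1 x y * a.1 y z) / (∑ y, b.2 y * a.1 y z),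
   fun z => a.2 z * ∑ y, b.2 y * a.1 y z)

/-- The composite element
`(p(x_{j+l} ∣ y_{j:j+l}, x_{j-1}), p(y_{j:j+l} ∣ x_{j-1}))`; in particular
`hmmComposite trans like j 0` is the single-step element
`a_j = (p(x_j ∣ y_j, x_{j-1}), p(y_j ∣ x_{j-1}))`. -/
noncomputable def hmmComposite {S : Type*} [Fintype S]
    (trans : ℕ → S → S → ℝ) (like : ℕ → S → ℝ) (j l : ℕ) :
    (S → S → ℝ) × (S → ℝ) :=
  (fun x z => hmmDelta trans like j l z x / ∑ x', hmmDelta trans like j l z x',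
   fun z => ∑ x', hmmDelta trans like j l z x')

/-! In a discrete HMM the joint weights `hmmDelta j l z x` compose by Chapman–Kolmogorov:
the weights over `l + 2` steps are the matrix product of the one-step weights with the weights
over the remaining `l + 1` steps. Every element `hmmComposite j l` is the pair (row-normalised
weights, row sums) of such a weight matrix, and `⊗` turns two such pairs into the pair of the
product matrix as soon as all row sums are nonzero; positivity of the model guarantees that. -/

section NormalizedPair

variable {S : Type*} [Fintype S]

noncomputable def normalizedPair (D : S → S → ℝ) : (S → S → ℝ) × (S → ℝ) :=
  (fun x z => D z x / ∑ x', D z x', fun z => ∑ x', D z x')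

theorem filtOp_normalizedPair (P Q : S → S → ℝ)
    (hP : ∀ z, ∑ x, P z x ≠ 0) (hQ : ∀ y, ∑ x, Q y x ≠ 0) :
    filtOp (normalizedPair P) (normalizedPair Q)
      = normalizedPair (fun z x => ∑ y, P z y * Q y x) := by
  have hmarginal : ∀ z, ∑ y, (∑ x, Q y x) * (P z y / ∑ x, P z x)
      = (∑ x, ∑ y, P z y * Q y x) / ∑ x, P z x := by
    intro z
    simp only [← mul_div_assoc, ← sum_div]
    rw [sum_comm]
    exact congrArg (· / _) (sum_congr rfl fun y _ => by rw [mul_comm, mul_sum])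
  refine Prod.ext (funext₂ fun x z => ?_) (funext fun z => ?_)
  · have hnum : ∑ y, (∑ x, Q y x) * (Q y x / ∑ x, Q y x) * (P z y / ∑ x, P z x)
        = (∑ y, P z y * Q y x) / ∑ x, P z x := by
      simp only [← mul_div_assoc, ← sum_div]
      congr 1
      refine sum_congr rfl fun y _ => ?_
      rw [mul_div_cancel_left₀ _ (hQ y), mul_comm]
    simp only [filtOp, normalizedPair]
    rw [hnum, hmarginal, div_div_div_cancel_right₀ (hP z)]
  · simp only [filtOp, normalizedPair]
    rw [hmarginal, mul_div_cancel₀ _ (hP z)]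

end NormalizedPair

section HMM

variable {S : Type*} [Fintype S] (trans : ℕ → S → S → ℝ) (like : ℕ → S → ℝ)

theorem hmmComposite_eq_normalizedPair (j l : ℕ) :
    hmmComposite trans like j l = normalizedPair (hmmDelta trans like j l) :=
  rfl

theorem hmmDelta_succ (j l : ℕ) (z x : S) :
    hmmDelta trans like j (l + 1) z x
      = ∑ y, hmmDelta trans like j 0 z y * hmmDelta trans like (j + 1) l y x := by
  induction l generalizing x with
  | zero =>
    simp only [hmmDelta, add_zero, sum_mul, mul_assoc]
  | succ l ih =>
    rw [hmmDelta.eq_2, show j + (l + 1) + 1 = j + 1 + l + 1 by omega]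
    simp only [ih, hmmDelta.eq_2 trans like (j + 1), sum_mul, mul_sum, mul_assoc]
    exact sum_comm

theorem hmmDelta_pos [Nonempty S] (htrans : ∀ n z x, 0 < trans n z x)
    (hlike : ∀ n x, 0 < like n x) (j l : ℕ) (z x : S) :
    0 < hmmDelta trans like j l z x := by
  induction l generalizing x with
  | zero => exact mul_pos (htrans _ _ _) (hlike _ _)
  | succ l ih =>
    exact mul_pos (sum_pos (fun w _ => mul_pos (ih w) (htrans _ _ _)) univ_nonempty) (hlike _ _)

theorem sum_hmmDelta_ne_zero [Nonempty S] (htrans : ∀ n z x, 0 < trans n z x)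
    (hlike : ∀ n x, 0 < like n x) (j l : ℕ) (z : S) :
    ∑ x, hmmDelta trans like j l z x ≠ 0 :=
  (sum_pos (fun x _ => hmmDelta_pos trans like htrans hlike j l z x) univ_nonempty).ne'

end HMM

theorem filtering_induction_step_general {S : Type*} [Fintype S] [Nonempty S]
    (trans : ℕ → S → S → ℝ) (like : ℕ → S → ℝ)
    (htrans : ∀ n z x, 0 < trans n z x)
    (hlike : ∀ n x, 0 < like n x)
    (j l : ℕ) :
    filtOp (hmmComposite trans like j 0) (hmmComposite trans like (j + 1) l)
      = hmmComposite trans like j (l + 1) := by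
  have hrows := sum_hmmDelta_ne_zero trans like htrans hlike
  simp only [hmmComposite_eq_normalizedPair]
  rw [filtOp_normalizedPair _ _ (hrows j 0) (hrows (j + 1) l)]
  congr 1
  funext z x
  exact (hmmDelta_succ trans like j l z x).symm

/-- **Induction step for parallel filtering** (discrete hidden Markov model):
if `a_{k-l+1} ⊗ ⋯ ⊗ a_k = (p(x_k ∣ y_{k-l+1:k}, x_{k-l}), p(y_{k-l+1:k} ∣ x_{k-l}))`,
then composing with `a_{k-l}` on the left gives
`(p(x_k ∣ y_{k-l:k}, x_{k-l-1}), p(y_{k-l:k} ∣ x_{k-l-1}))`.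
Here `j = k - l` and the composite on `l + 1` observations appears on the right. -/
theorem filtering_induction_step {S : Type*} [Fintype S] [Nonempty S]
    (trans : ℕ → S → S → ℝ) (like : ℕ → S → ℝ)
    (htrans : ∀ n z x, 0 < trans n z x)
    (hlike : ∀ n x, 0 < like n x)
    (htrans1 : ∀ n z, ∑ x, trans n z x = 1)
    (j l : ℕ) (hj : 1 ≤ j) :
    filtOp (hmmComposite trans like j 0) (hmmComposite trans like (j + 1) l)
      = hmmComposite trans like j (l + 1) :=
  filtering_induction_step_general trans like htrans hlike j l
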